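/- Let n ≥ 3, let T be a strong tournament on {1,…,n}, and let u, v be distinct vertices with (u, v) not an edge of T. Then ℓ(T, (u→v)) = 4·d_T(u, v) − 2, where d_T(u, v) is the length of a shortest directed path from u to v in T. -/

import Mathlib

noncomputable section

variable {V : Type*}

/-- The arc `(a→b)`: the map sending `a` to `b` and fixing every other point. -/
def arcMap [DecidableEq V] (a b : V) : V → V := fun x => if x = a then b else x

/-- Evaluate a word of arcs, applying the arcs from left to right. -/
def wordEval [DecidableEq V] (w : List (V × V)) : V → V :=
  fun x => w.foldl (fun y e => arcMap e.1 e.2 y) x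

/-- `α ∈ ⟨D⟩`: `α` is a (nonempty) product of arcs of the digraph `D`. -/
def InGen [DecidableEq V] (D : V → V → Prop) (α : V → V) : Prop :=
  ∃ w : List (V × V), w ≠ [] ∧ (∀ e ∈ w, D e.1 e.2) ∧ wordEval w = α

/-- `ℓ(D, α)`: the minimal length of a word in the arcs of `D` expressing `α`. -/
def arcLen [DecidableEq V] (D : V → V → Prop) (α : V → V) : ℕ :=
  sInf {k | ∃ w : List (V × V), w.length = k ∧ (∀ e ∈ w, D e.1 e.2) ∧ wordEval w = α}

/-- `fix(α)`: the number of fixed points of `α`. -/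
def fixCnt (α : V → V) : ℕ := Set.ncard {x | α x = x}

/-- `rk(α)`: the rank of `α`, i.e. the cardinality of its image. -/
def rnk (α : V → V) : ℕ := Set.ncard (Set.range α)

/-- A set `C` is a cyclic orbit of `α` if it is a weakly connected component of the
functional digraph of `α` (edges `(x, α x)`) which is a directed cycle on at least two
vertices: equivalently, `C` is the forward orbit of a periodic point, has at least two
elements, and is closed under taking preimages. -/
def IsCyclicOrbit (α : V → V) (C : Set V) : Prop :=
  2 ≤ C.ncard ∧ (∃ x ∈ C, (∃ k, 0 < k ∧ α^[k] x = x) ∧ C = {y | ∃ k, α^[k] x = y}) ∧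
    ∀ y : V, α y ∈ C → y ∈ C

/-- `cycl(α)`: the number of cyclic orbits of `α`. -/
def cyclCnt (α : V → V) : ℕ := Set.ncard {C : Set V | IsCyclicOrbit α C}

/-- `D` is connected: any two vertices are joined by a directed path in some direction. -/
def ConnectedDigraph (D : V → V → Prop) : Prop :=
  ∀ u v : V, Relation.ReflTransGen D u v ∨ Relation.ReflTransGen D v u

/-- `D` is closed (equal to its closure): whenever `(b,a)` is an edge lying on a directed
cycle of `D` (i.e. there is a directed path from `a` back to `b`), `(a,b)` is also an edge. -/
def ClosedDigraph (D : V → V → Prop) : Prop :=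
  ∀ a b : V, D b a → Relation.ReflTransGen D a b → D a b

/-- Property (★): if `v0, v1, v2` is a directed path with `d_D(v0,v2) = 2`, then every
out-neighbour of `v1` and of `v2` lies in `{v0, v1, v2}`. -/
def StarCond (D : V → V → Prop) : Prop :=
  ∀ v0 v1 v2 : V, D v0 v1 → D v1 v2 → v0 ≠ v2 → ¬ D v0 v2 →
    ∀ u : V, (D v1 u ∨ D v2 u) → (u = v0 ∨ u = v1 ∨ u = v2)

/-- `C` is a strong component of `D`. -/
def IsSC (D : V → V → Prop) (C : Set V) : Prop :=
  ∃ v : V, C = {u | Relation.ReflTransGen D u v ∧ Relation.ReflTransGen D v u}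

/-- `C1` connects to `C2`: some edge goes from `C1` to `C2`. -/
def ConnectsTo (D : V → V → Prop) (C1 C2 : Set V) : Prop :=
  ∃ v1 ∈ C1, ∃ v2 ∈ C2, D v1 v2

/-- `C1` fully connects to `C2`: all pairs are edges. -/
def FullyConnects (D : V → V → Prop) (C1 C2 : Set V) : Prop :=
  ∀ v1 ∈ C1, ∀ v2 ∈ C2, D v1 v2

/-- A terminal strong component: it connects to no other strong component. -/
def IsTerminalSC (D : V → V → Prop) (C : Set V) : Prop :=
  IsSC D C ∧ ∀ C' : Set V, IsSC D C' → C' ≠ C → ¬ ConnectsTo D C C'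

/-- Property (★★): nonterminal strong components have at most 2 vertices and terminal
strong components have at most 3 vertices. -/
def StarStarCond (D : V → V → Prop) : Prop :=
  ∀ C : Set V, IsSC D C →
    (IsTerminalSC D C → C.ncard ≤ 3) ∧ (¬ IsTerminalSC D C → C.ncard ≤ 2)

/-- The induced subdigraph on `C` is an undirected path `a - b - c` on three vertices. -/
def IsP3 (D : V → V → Prop) (C : Set V) : Prop :=
  ∃ a b c : V, a ≠ b ∧ b ≠ c ∧ a ≠ c ∧ C = {a, b, c} ∧
    ∀ u ∈ C, ∀ w ∈ C,
      (D u w ↔ (u = a ∧ w = b) ∨ (u = b ∧ w = a) ∨ (u = b ∧ w = c) ∨ (u = c ∧ w = b))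

/-- `D` has a subdigraph isomorphic to `H`: an injection mapping edges of `H` to edges of `D`. -/
def HasSubdigraph (D : V → V → Prop) {m : ℕ} (H : Fin m → Fin m → Prop) : Prop :=
  ∃ f : Fin m → V, Function.Injective f ∧ ∀ i j : Fin m, H i j → D (f i) (f j)

/-- `Θ_k`: the directed cycle on `k` vertices. -/
def Theta (k : ℕ) : Fin k → Fin k → Prop := fun i j => (j : ℕ) = ((i : ℕ) + 1) % k

/-- `Γ1` (vertices relabelled from `{1,…,5}` to `{0,…,4}`). -/
def Gamma1 : Fin 5 → Fin 5 → Prop := fun i j =>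
  ((i : ℕ), (j : ℕ)) ∈ [(0,3),(3,0),(1,3),(3,1),(2,3),(3,2),(3,4)]

/-- `Γ2` (vertices relabelled from `{1,…,5}` to `{0,…,4}`). -/
def Gamma2 : Fin 5 → Fin 5 → Prop := fun i j =>
  ((i : ℕ), (j : ℕ)) ∈ [(0,2),(2,0),(1,2),(2,1),(2,3),(3,2),(3,4)]

/-- `Γ3` (vertices relabelled from `{1,…,4}` to `{0,…,3}`). -/
def Gamma3 : Fin 4 → Fin 4 → Prop := fun i j =>
  ((i : ℕ), (j : ℕ)) ∈ [(0,1),(1,2),(2,0),(2,3)]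

/-- `Γ4` (vertices relabelled from `{1,…,5}` to `{0,…,4}`). -/
def Gamma4 : Fin 5 → Fin 5 → Prop := fun i j =>
  ((i : ℕ), (j : ℕ)) ∈ [(0,1),(1,2),(2,3),(3,0),(3,4)]

/-- No subdigraph isomorphic to `Γ1`, `Γ2`, `Γ3`, `Γ4` or `Θ_k` for `k ≥ 5`. -/
def ForbiddenFree (D : V → V → Prop) : Prop :=
  ¬ HasSubdigraph D Gamma1 ∧ ¬ HasSubdigraph D Gamma2 ∧ ¬ HasSubdigraph D Gamma3 ∧
    ¬ HasSubdigraph D Gamma4 ∧ ∀ k : ℕ, 5 ≤ k → ¬ HasSubdigraph D (Theta k)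

/-- `D` is acyclic: it has no directed cycle. -/
def AcyclicRel (D : V → V → Prop) : Prop := ∀ v : V, ¬ Relation.TransGen D v v

/-- `ψ_A(u,w)`: the maximal number of edges of a directed path from `u` to `w` in `A`
(in particular `ψ_A(u,u) = 0`). -/
def psiLongest (A : V → V → Prop) (u w : V) : ℕ :=
  sSup {l | ∃ p : List V, p.Chain' A ∧ p.Nodup ∧
    p.head? = some u ∧ p.getLast? = some w ∧ p.length = l + 1}

/-- `d_D(u,w)`: the minimal number of edges of a directed path from `u` to `w` in `D`. -/
def ddist (D : V → V → Prop) (u w : V) : ℕ :=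
  sInf {l | ∃ p : List V, p.Chain' D ∧ p.head? = some u ∧ p.getLast? = some w ∧
    p.length = l + 1}

/-- A tournament: no loops, and exactly one of `(u,v)`, `(v,u)` is an edge for `u ≠ v`. -/
def IsTournament (D : V → V → Prop) : Prop :=
  (∀ v : V, ¬ D v v) ∧ ∀ u v : V, u ≠ v → (D u v ∨ D v u) ∧ ¬ (D u v ∧ D v u)

/-- A strong (strongly connected) digraph. -/
def IsStrongDigraph (D : V → V → Prop) : Prop :=
  ∀ u v : V, Relation.ReflTransGen D u v

/-!
Think of a word as moving one token per vertex. For the lower bound, the first arc of a word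
for `(u→v)` must be `v → u`; from then on no two tokens merge, so an arc moves a token only onto
a vertex that is vacant at that moment, and it moves at most one token other than `v`. The
token `u` walks from `u` to `v`: it moves at least `d = d_T(u, v)` times, and each of the at
least `d + 1` vertices it visits was vacant at some time, so its token was displaced and, if it
is not `u` or `v`, made a closed walk, which in a tournament has length at least `3`. Hence the
word has at least `1 + d + 3 (d - 1)` arcs.

For the upper bound, along a geodesic `u = p 0, …, p d = v` the arcs `p (j + 1) → p (j - 1)`
and `v → u` exist since `T` is a tournament and the geodesic has no shortcuts; with them the
pair of tokens `u, v` can be carried to `v` in `4 d - 2` steps.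
-/

section Walk

variable {D : V → V → Prop}

theorem ddist_le_of_walk {p : ℕ → V} {m : ℕ} (hp : ∀ t < m, D (p t) (p (t + 1))) :
    ddist D (p 0) (p m) ≤ m :=
  Nat.sInf_le ⟨(List.range (m + 1)).map p, List.isChain_map p |>.2 <|
    (List.isChain_range_succ _ m).2 hp, by simp [List.head?_range], by simp [List.getLast?_range],
    by simp⟩

theorem exists_walk_length_ddist {a b : V} (h : Relation.ReflTransGen D a b) :
    ∃ p : ℕ → V, p 0 = a ∧ p (ddist D a b) = b ∧
      ∀ t < ddist D a b, D (p t) (p (t + 1)) := by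
  obtain ⟨l, hl, hlast⟩ := List.exists_isChain_cons_of_relationReflTransGen h
  obtain ⟨P, hP, hhead, hlast, hlen⟩ : ∃ P : List V, P.IsChain D ∧ P.head? = some a ∧
      P.getLast? = some b ∧ P.length = ddist D a b + 1 :=
    Nat.sInf_mem (s := {l | ∃ p : List V, p.IsChain D ∧ p.head? = some a ∧
      p.getLast? = some b ∧ p.length = l + 1})
      ⟨l.length, a :: l, hl, rfl, by simp [List.getLast?_eq_some_getLast, hlast], rfl⟩
  refine ⟨fun i => P.getD i a, ?_, ?_, fun t ht => ?_⟩
  · simpa [List.getD_eq_getElem?_getD, List.head?_eq_getElem?] using congrArg (·.getD a) hhead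
  · simpa [List.getD_eq_getElem?_getD, List.getLast?_eq_getElem?, hlen] using
      congrArg (·.getD a) hlast
  · simp only [List.getD_eq_getElem P a (show t < P.length by omega),
      List.getD_eq_getElem P a (show t + 1 < P.length by omega)]
    exact List.isChain_iff_getElem.1 hP t (by omega)

theorem exists_walk_of_apply_eq {p : ℕ → V} {m i j : ℕ} (hp : ∀ t < m, D (p t) (p (t + 1)))
    (hij : i < j) (hjm : j ≤ m) (heq : p i = p j) :
    ∃ q : ℕ → V, q 0 = p 0 ∧ q (m - (j - i)) = p m ∧
      (∀ t < m - (j - i), D (q t) (q (t + 1))) ∧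
      ∀ t ≤ m - (j - i), ∃ s ≤ m, q t = p s := by
  refine ⟨fun t => if t ≤ i then p t else p (t + (j - i)), by simp, ?_, fun t ht => ?_,
    fun t ht => ?_⟩
  · dsimp only
    split_ifs with h
    · rw [show m - (j - i) = i by omega, heq, show j = m by omega]
    · rw [show m - (j - i) + (j - i) = m by omega]
  · dsimp only
    split_ifs with h1 h2 h2
    · exact hp t (by omega)
    · rw [show t = i by omega, heq, show i + 1 + (j - i) = j + 1 by omega]
      exact hp j (by omega)
    · omega
    · rw [show t + 1 + (j - i) = t + (j - i) + 1 by omega]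
      exact hp _ (by omega)
  · dsimp only
    split_ifs
    · exact ⟨t, by omega, rfl⟩
    · exact ⟨t + (j - i), by omega, rfl⟩

theorem ddist_lt_card_image_of_walk [DecidableEq V] {p : ℕ → V} {m : ℕ}
    (hp : ∀ t < m, D (p t) (p (t + 1))) :
    ddist D (p 0) (p m) < ((Finset.range (m + 1)).image p).card := by
  induction m using Nat.strong_induction_on generalizing p with
  | _ m ih =>
  by_cases hinj : Set.InjOn p (Finset.range (m + 1))
  · rw [Finset.card_image_of_injOn hinj, Finset.card_range]
    exact Nat.lt_succ_of_le (ddist_le_of_walk hp)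
  obtain ⟨i, j, hij, hjm, heq⟩ : ∃ i j, i < j ∧ j ≤ m ∧ p i = p j := by
    simp only [Set.InjOn, Finset.coe_range, Set.mem_Iio, not_forall] at hinj
    obtain ⟨i, hi, j, hj, heq, hne⟩ := hinj
    rcases Nat.lt_or_gt_of_ne hne with h | h
    · exact ⟨i, j, h, by omega, heq⟩
    · exact ⟨j, i, h, by omega, heq.symm⟩
  obtain ⟨q, hq0, hqm, hq, hqp⟩ := exists_walk_of_apply_eq hp hij hjm heq
  calc ddist D (p 0) (p m) = ddist D (q 0) (q (m - (j - i))) := by rw [hq0, hqm]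
    _ < ((Finset.range (m - (j - i) + 1)).image q).card := ih _ (by omega) hq
    _ ≤ ((Finset.range (m + 1)).image p).card := by
      refine Finset.card_le_card fun x hx => ?_
      obtain ⟨t, ht, rfl⟩ := Finset.mem_image.1 hx
      obtain ⟨s, hs, hst⟩ := hqp t (by simpa [Nat.lt_succ_iff] using ht)
      exact Finset.mem_image.2 ⟨s, by simpa [Nat.lt_succ_iff] using hs, hst.symm⟩

theorem injOn_of_le_ddist {p : ℕ → V} {m : ℕ} (hp : ∀ t < m, D (p t) (p (t + 1)))
    (hmin : m ≤ ddist D (p 0) (p m)) : Set.InjOn p (Set.Iic m) := by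
  intro i hi j hj heq
  simp only [Set.mem_Iic] at hi hj
  have shorter : ∀ i j, i < j → j ≤ m → p i ≠ p j := fun i j hij hj heq => by
    obtain ⟨q, hq0, hqm, hq, -⟩ := exists_walk_of_apply_eq hp hij hj heq
    have := ddist_le_of_walk hq
    rw [hq0, hqm] at this
    omega
  by_contra hne
  rcases Nat.lt_or_gt_of_ne hne with h | h
  · exact shorter i j h hj heq
  · exact shorter j i h hi heq.symm

theorem IsTournament.rel_succ_pred_of_le_ddist {T : V → V → Prop} (hT : IsTournament T)
    {p : ℕ → V} {m : ℕ} (hp : ∀ t < m, T (p t) (p (t + 1)))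
    (hmin : m ≤ ddist T (p 0) (p m)) {t : ℕ} (ht : 1 ≤ t) (htm : t < m) :
    T (p (t + 1)) (p (t - 1)) := by
  have hne : p (t + 1) ≠ p (t - 1) := fun h => by
    have := injOn_of_le_ddist hp hmin (Set.mem_Iic.2 (by omega)) (Set.mem_Iic.2 (by omega)) h
    omega
  refine (hT.2 _ _ hne).1.resolve_right fun hskip => ?_
  let q : ℕ → V := fun s => if s < t then p s else p (s + 1)
  have hq : ∀ s < m - 1, T (q s) (q (s + 1)) := by
    intro s hs
    simp only [q]
    split_ifs with h1 h2 h2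
    · exact hp s (by omega)
    · rw [show s = t - 1 by omega, show t - 1 + 1 + 1 = t + 1 by omega]
      exact hskip
    · omega
    · exact hp (s + 1) (by omega)
  have := ddist_le_of_walk hq
  simp only [q, Nat.zero_lt_of_lt ht, if_true, show ¬ m - 1 < t by omega, if_false,
    show m - 1 + 1 = m by omega] at this
  omega

theorem IsTournament.three_le_of_walk_of_closed {T : V → V → Prop} (hT : IsTournament T)
    {q : ℕ → V} {m : ℕ} (hq : ∀ t < m, T (q t) (q (t + 1))) (hm : 0 < m) (hcl : q m = q 0) :
    3 ≤ m := by
  by_contra! h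
  interval_cases m
  · exact hT.1 (q 0) (hcl ▸ hq 0 one_pos)
  · by_cases h10 : q 1 = q 0
    · exact hT.1 (q 0) (h10 ▸ hq 0 two_pos)
    · exact (hT.2 _ _ h10).2 ⟨by simpa [hcl] using hq 1 one_lt_two, hq 0 two_pos⟩

end Walk

section Arc

variable [DecidableEq V] {a b x y : V}

theorem arcMap_self_left : arcMap a b a = b := if_pos rfl

theorem arcMap_of_ne (h : x ≠ a) : arcMap a b x = x := if_neg h

theorem eq_of_arcMap_ne (h : arcMap a b x ≠ x) : x = a := by
  by_contra hx
  exact h (arcMap_of_ne hx)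

theorem injOn_arcMap : Set.InjOn (arcMap a b) {a}ᶜ := fun x hx y hy h => by
  rwa [arcMap_of_ne hx, arcMap_of_ne hy] at h

theorem arcMap_eq_arcMap_iff (hab : a ≠ b) :
    arcMap a b x = arcMap a b y ↔ x = y ∨ (x = a ∧ y = b) ∨ (x = b ∧ y = a) := by
  unfold arcMap
  split_ifs <;> grind

end Arc

section Run

variable [DecidableEq V] {T : V → V → Prop}

def moves (g : ℕ → V) (k : ℕ) : Finset ℕ :=
  (Finset.range k).filter fun j => g (j + 1) ≠ g j

theorem exists_walk_card_moves {g : ℕ → V} {k : ℕ}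
    (hg : ∀ j < k, g (j + 1) = g j ∨ T (g j) (g (j + 1))) :
    ∃ q : ℕ → V, q 0 = g 0 ∧ q (moves g k).card = g k ∧
      (∀ t < (moves g k).card, T (q t) (q (t + 1))) ∧
      ∀ t ≤ (moves g k).card, ∃ j ≤ k, q t = g j := by
  induction k with
  | zero => exact ⟨fun _ => g 0, rfl, rfl, by simp [moves], fun t _ => ⟨0, le_rfl, rfl⟩⟩
  | succ k ih =>
    obtain ⟨q, hq0, hqm, hq, hqg⟩ := ih fun j hj => hg j (by omega)
    have hmoves : moves g (k + 1) =
        if g (k + 1) ≠ g k then insert k (moves g k) else moves g k := by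
      simp only [moves, Finset.range_add_one, Finset.filter_insert]
    by_cases hstay : g (k + 1) = g k
    · rw [hmoves, if_neg (not_not.2 hstay)]
      exact ⟨q, hq0, hqm.trans hstay.symm, hq,
        fun t ht => (hqg t ht).imp fun j hj => ⟨by omega, hj.2⟩⟩
    have hk : k ∉ moves g k := by simp [moves]
    rw [hmoves, if_pos hstay, Finset.card_insert_of_notMem hk]
    set m := (moves g k).card
    refine ⟨fun t => if t ≤ m then q t else g (k + 1), by simp [hq0], by simp, fun t ht => ?_,
      fun t ht => ?_⟩
    · dsimp only
      split_ifs with h1 h2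
      · exact hq t (by omega)
      · rw [show t = m by omega, hqm]
        exact (hg k (by omega)).resolve_left hstay
      all_goals omega
    · dsimp only
      split_ifs with h
      · obtain ⟨j, hj, hqj⟩ := hqg t h
        exact ⟨j, by omega, hqj⟩
      · exact ⟨k + 1, le_rfl, rfl⟩

theorem IsTournament.three_le_card_moves (hT : IsTournament T) {g : ℕ → V} {k j : ℕ}
    (hg : ∀ j < k, g (j + 1) = g j ∨ T (g j) (g (j + 1))) (hcl : g k = g 0) (hjk : j ≤ k)
    (hj : g j ≠ g 0) : 3 ≤ (moves g k).card := by
  obtain ⟨q, hq0, hqm, hq, -⟩ := exists_walk_card_moves hg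
  refine hT.three_le_of_walk_of_closed hq (Finset.card_pos.2 ?_) (by rw [hq0, hqm, hcl])
  by_contra hempty
  have hconst : ∀ i ≤ k, g i = g 0 := by
    intro i
    induction i with
    | zero => simp
    | succ i ih =>
      intro hi
      rw [← ih (by omega)]
      by_contra hmove
      exact hempty ⟨i, by simp [moves, hmove]; omega⟩
  exact hj (hconst j hjk)

/-- `f j x` is read as the position at time `j` of the token `x`. -/
def IsArcRun (T : V → V → Prop) (f : ℕ → V → V) (k : ℕ) : Prop :=
  ∀ j < k, ∃ a b, T a b ∧ ∀ x, f (j + 1) x = arcMap a b (f j x)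

namespace IsArcRun

variable {f : ℕ → V → V} {k : ℕ}

theorem apply_eq_or_rel (hf : IsArcRun T f k) (x : V) :
    ∀ j < k, f (j + 1) x = f j x ∨ T (f j x) (f (j + 1) x) := by
  intro j hj
  obtain ⟨a, b, hab, hstep⟩ := hf j hj
  rw [hstep]
  by_cases hx : f j x = a
  · exact Or.inr (by rwa [hx, arcMap_self_left])
  · exact Or.inl (arcMap_of_ne hx)

theorem apply_eq_apply (hf : IsArcRun T f k) {i j : ℕ} (hij : i ≤ j) (hjk : j ≤ k) {x y : V}
    (h : f i x = f i y) : f j x = f j y := by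
  induction j, hij using Nat.le_induction with
  | base => exact h
  | succ j _ ih =>
    obtain ⟨a, b, -, hstep⟩ := hf j (by omega)
    rw [hstep, hstep, ih (by omega)]

variable (hker : ∀ x y, f k x = f k y → f 0 x = f 0 y)
include hker

theorem apply_ne_of_move (hf : IsArcRun T f k) {j : ℕ} (hj : j < k) {x : V}
    (hx : f (j + 1) x ≠ f j x) (z : V) : f j z ≠ f (j + 1) x := by
  obtain ⟨a, b, -, hstep⟩ := hf j hj
  have hxa : f j x = a := eq_of_arcMap_ne (hstep x ▸ hx)
  have hxb : f (j + 1) x = b := by rw [hstep, hxa, arcMap_self_left]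
  intro hz
  have hzx : f (j + 1) z = f (j + 1) x := by
    rw [hstep z, hz, hxb]
    unfold arcMap
    split_ifs with h <;> simp [h]
  have hzx0 := hker z x (hf.apply_eq_apply (by omega) le_rfl hzx)
  have hab : a = b := by
    rw [← hxa, ← hxb, ← hz, hf.apply_eq_apply (Nat.zero_le j) (by omega) hzx0]
  exact hx (by rw [hxb, hxa, hab])

theorem apply_zero_eq_of_move (hf : IsArcRun T f k) {j : ℕ} (hj : j < k) {x y : V}
    (hx : f (j + 1) x ≠ f j x) (hy : f (j + 1) y ≠ f j y) : f 0 x = f 0 y := by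
  obtain ⟨a, b, -, hstep⟩ := hf j hj
  have hxa : f j x = a := eq_of_arcMap_ne (hstep x ▸ hx)
  have hya : f j y = a := eq_of_arcMap_ne (hstep y ▸ hy)
  exact hker x y (hf.apply_eq_apply hj.le le_rfl (hxa.trans hya.symm))

theorem sum_card_moves_le (hf : IsArcRun T f k) {S : Finset V} (hS : Set.InjOn (f 0) S) :
    ∑ x ∈ S, (moves (f · x) k).card ≤ k := by
  have hdisj : (S : Set V).PairwiseDisjoint fun x => moves (f · x) k := by
    intro x hx y hy hxy
    refine Finset.disjoint_left.2 fun j hjx hjy => hxy (hS hx hy ?_)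
    simp only [moves, Finset.mem_filter, Finset.mem_range] at hjx hjy
    exact hf.apply_zero_eq_of_move hker hjx.1 hjx.2 hjy.2
  calc ∑ x ∈ S, (moves (f · x) k).card = (S.biUnion fun x => moves (f · x) k).card :=
        (Finset.card_biUnion hdisj).symm
    _ ≤ (Finset.range k).card :=
        Finset.card_le_card (Finset.biUnion_subset.2 fun _ _ => Finset.filter_subset _ _)
    _ = k := Finset.card_range k

theorem apply_eq_or_exists_apply_ne (hf : IsArcRun T f k) (x : V) :
    ∀ j ≤ k, f j x = f 0 x ∨ ∃ i ≤ k, f i (f j x) ≠ f j x := by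
  intro j
  induction j with
  | zero => simp
  | succ j ih =>
    intro hj
    by_cases hmove : f (j + 1) x = f j x
    · rw [hmove]
      exact ih (by omega)
    · exact Or.inr ⟨j, by omega, hf.apply_ne_of_move hker (by omega) hmove _⟩

end IsArcRun

end Run

theorem IsArcRun.four_mul_ddist_le_add_three [Fintype V] [DecidableEq V] {T : V → V → Prop}
    (hT : IsTournament T) {f : ℕ → V → V} {k : ℕ} (hf : IsArcRun T f k) {u v : V}
    (huv : u ≠ v) (h0 : f 0 = arcMap v u) (hk : f k = arcMap u v) :
    4 * ddist T u v ≤ k + 3 := by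
  have hker : ∀ x y, f k x = f k y → f 0 x = f 0 y := by
    simp only [h0, hk, arcMap_eq_arcMap_iff huv, arcMap_eq_arcMap_iff huv.symm]
    tauto
  set M : Finset V := {y | ∃ j ≤ k, f j y ≠ y}
  have huM : u ∈ M := by
    simpa [M] using ⟨k, le_rfl, by rw [hk, arcMap_self_left]; exact huv.symm⟩
  obtain ⟨q, hq0, hqm, hq, hqf⟩ := exists_walk_card_moves (g := (f · u)) (hf.apply_eq_or_rel u)
  rw [h0, arcMap_of_ne huv] at hq0
  rw [hk, arcMap_self_left] at hqm
  -- every vertex the token `u` visits is vacated at some time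
  have hqM : (Finset.range ((moves (f · u) k).card + 1)).image q ⊆ M := by
    intro y hy
    obtain ⟨t, ht, rfl⟩ := Finset.mem_image.1 hy
    obtain ⟨j, hj, hqj⟩ := hqf t (by simpa [Nat.lt_succ_iff] using ht)
    rw [hqj]
    rcases hf.apply_eq_or_exists_apply_ne hker u j hj with h | h
    · rwa [h, h0, arcMap_of_ne huv]
    · simpa [M] using h
  have hmoves_u : ddist T u v ≤ (moves (f · u) k).card := by
    simpa only [hq0, hqm] using ddist_le_of_walk hq
  have hcard : ddist T u v < M.card := by
    simpa only [hq0, hqm] using (ddist_lt_card_image_of_walk hq).trans_le (Finset.card_le_card hqM)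
  have hmoves : ∀ y ∈ (M.erase v).erase u, 3 ≤ (moves (f · y) k).card := by
    intro y hy
    simp only [M, Finset.mem_erase, Finset.mem_filter, Finset.mem_univ, true_and] at hy
    obtain ⟨hyu, hyv, j, hj, hjy⟩ := hy
    have hy0 : f 0 y = y := by rw [h0, arcMap_of_ne hyv]
    refine hT.three_le_card_moves (g := (f · y)) (hf.apply_eq_or_rel y) ?_ hj (by rwa [hy0])
    rw [hy0, hk, arcMap_of_ne hyu]
  have hsum := hf.sum_card_moves_le hker (S := M.erase v) <|
    h0 ▸ injOn_arcMap.mono fun x hx => (Finset.mem_erase.1 hx).1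
  rw [← Finset.add_sum_erase _ _ (Finset.mem_erase.2 ⟨huv, huM⟩)] at hsum
  have h3 := Finset.card_nsmul_le_sum _ _ 3 hmoves
  have hMv := Finset.pred_card_le_card_erase (s := M) (a := v)
  have hMu := Finset.pred_card_le_card_erase (s := M.erase v) (a := u)
  simp only [smul_eq_mul] at h3
  omega

section Word

variable [DecidableEq V] {T : V → V → Prop}

theorem wordEval_append (w₁ w₂ : List (V × V)) (x : V) :
    wordEval (w₁ ++ w₂) x = wordEval w₂ (wordEval w₁ x) := by
  simp [wordEval, List.foldl_append]

theorem wordEval_cons (e : V × V) (w : List (V × V)) (x : V) :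
    wordEval (e :: w) x = wordEval w (arcMap e.1 e.2 x) := rfl

theorem isArcRun_wordEval_take {w : List (V × V)} (hw : ∀ e ∈ w, T e.1 e.2) (g : V → V) :
    IsArcRun T (fun j x => wordEval (w.take j) (g x)) w.length := by
  intro j hj
  refine ⟨w[j].1, w[j].2, hw _ (List.getElem_mem hj), fun x => ?_⟩
  dsimp only
  rw [List.take_add_one, List.getElem?_eq_getElem hj, Option.toList_some, wordEval_append]
  rfl

theorem head_eq_of_wordEval_eq_arcMap (hT : IsTournament T) {u v : V} (huv : u ≠ v)
    (hnedge : ¬ T u v) {e : V × V} {w : List (V × V)} (he : T e.1 e.2)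
    (heval : wordEval (e :: w) = arcMap u v) : e = (v, u) := by
  have hne : e.1 ≠ e.2 := fun h => hT.1 e.1 (h ▸ he)
  have hmerge : arcMap u v e.1 = arcMap u v e.2 := by
    rw [← heval, wordEval_cons, wordEval_cons, arcMap_self_left, arcMap_of_ne hne.symm]
  rcases (arcMap_eq_arcMap_iff huv).1 hmerge with h | ⟨h1, h2⟩ | ⟨h1, h2⟩
  · exact absurd h hne
  · exact absurd (h1 ▸ h2 ▸ he) hnedge
  · exact Prod.ext h1 h2

theorem four_mul_ddist_sub_two_le_length [Fintype V] (hT : IsTournament T) {u v : V}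
    (huv : u ≠ v) (hnedge : ¬ T u v) {w : List (V × V)} (hw : ∀ e ∈ w, T e.1 e.2)
    (heval : wordEval w = arcMap u v) : 4 * ddist T u v - 2 ≤ w.length := by
  obtain _ | ⟨e, w⟩ := w
  · exact absurd (congrFun heval u) (by simp [wordEval, arcMap_self_left, huv])
  obtain rfl := head_eq_of_wordEval_eq_arcMap hT huv hnedge (hw e List.mem_cons_self) heval
  have hrun := isArcRun_wordEval_take (fun e he => hw e (List.mem_cons_of_mem _ he)) (arcMap v u)
  have := hrun.four_mul_ddist_le_add_three hT huv rfl (by rw [List.take_length, ← heval]; rfl)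
  simp only [List.length_cons]
  omega

end Word

section Construction

variable (p : ℕ → V)

def shiftWord : ℕ → List (V × V)
  | 0 => []
  | m + 1 => (p m, p (m + 1)) :: shiftWord m

def zigzagWord : ℕ → ℕ → List (V × V)
  | _, 0 => []
  | i, c + 1 => (p (i + 1), p (i - 1)) :: (p i, p (i + 1)) :: zigzagWord (i + 1) c

/-- After the arc `p d → p 0` the tokens `p 0` and `p d` share the vertex `p 0`. The first shift
moves every token of the path one step forward; the zigzag then carries that pair from `p 1` to
`p d` while sending each token `p j`, `0 < j < d`, back to `p (j - 1)` along the arcs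
`p (j + 1) → p (j - 1)`; the second shift brings those tokens home. -/
def geodesicWord (d : ℕ) : List (V × V) :=
  (p d, p 0) :: (shiftWord p d ++ zigzagWord p 1 (d - 1) ++ shiftWord p (d - 1))

@[simp] theorem length_shiftWord : ∀ m, (shiftWord p m).length = m
  | 0 => rfl
  | m + 1 => by simp [shiftWord, length_shiftWord m]

@[simp] theorem length_zigzagWord : ∀ i c, (zigzagWord p i c).length = 2 * c
  | _, 0 => rfl
  | i, c + 1 => by simp only [zigzagWord, List.length_cons, length_zigzagWord (i + 1) c]; ring

theorem length_geodesicWord {d : ℕ} (hd : 2 ≤ d) : (geodesicWord p d).length = 4 * d - 2 := by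
  simp [geodesicWord]
  omega

variable {p} {T : V → V → Prop}

theorem rel_of_mem_shiftWord {m : ℕ} (hp : ∀ t < m, T (p t) (p (t + 1))) :
    ∀ e ∈ shiftWord p m, T e.1 e.2 := by
  induction m with
  | zero => simp [shiftWord]
  | succ m ih =>
    simp only [shiftWord, List.forall_mem_cons]
    exact ⟨hp m (by omega), ih fun t ht => hp t (by omega)⟩

theorem rel_of_mem_zigzagWord {i c : ℕ}
    (hp : ∀ t, i ≤ t → t < i + c → T (p (t + 1)) (p (t - 1)) ∧ T (p t) (p (t + 1))) :
    ∀ e ∈ zigzagWord p i c, T e.1 e.2 := by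
  induction c generalizing i with
  | zero => simp [zigzagWord]
  | succ c ih =>
    simp only [zigzagWord, List.forall_mem_cons]
    obtain ⟨hback, hfwd⟩ := hp i le_rfl (by omega)
    exact ⟨hback, hfwd, ih fun t h1 h2 => hp t (by omega) (by omega)⟩

theorem rel_of_mem_geodesicWord {d : ℕ} (hp : ∀ t < d, T (p t) (p (t + 1)))
    (hback : ∀ t, 1 ≤ t → t < d → T (p (t + 1)) (p (t - 1))) (hclose : T (p d) (p 0)) :
    ∀ e ∈ geodesicWord p d, T e.1 e.2 := by
  simp only [geodesicWord, List.forall_mem_cons, List.mem_append]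
  refine ⟨hclose, fun e he => ?_⟩
  rcases he with (he | he) | he
  · exact rel_of_mem_shiftWord hp e he
  · exact rel_of_mem_zigzagWord (fun t h1 h2 => ⟨hback t h1 (by omega), hp t (by omega)⟩) e he
  · exact rel_of_mem_shiftWord (fun t ht => hp t (by omega)) e he

variable [DecidableEq V] {D : ℕ}

theorem wordEval_shiftWord_of_forall_ne {m : ℕ} {x : V} (hx : ∀ t < m, x ≠ p t) :
    wordEval (shiftWord p m) x = x := by
  induction m with
  | zero => rfl
  | succ m ih =>
    rw [shiftWord, wordEval_cons, arcMap_of_ne (hx m (by omega))]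
    exact ih fun t ht => hx t (by omega)

theorem wordEval_shiftWord_apply (hinj : Set.InjOn p (Set.Iic D)) {m j : ℕ} (hm : m ≤ D)
    (hj : j < m) : wordEval (shiftWord p m) (p j) = p (j + 1) := by
  induction m with
  | zero => omega
  | succ m ih =>
    rw [shiftWord, wordEval_cons]
    rcases Nat.lt_or_ge j m with hjm | hjm
    · rw [arcMap_of_ne (hinj.ne (show j ≤ D by omega) (show m ≤ D by omega) hjm.ne)]
      exact ih (by omega) hjm
    · obtain rfl : j = m := by omega
      rw [arcMap_self_left]
      exact wordEval_shiftWord_of_forall_ne fun t ht =>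
        hinj.ne (show j + 1 ≤ D by omega) (show t ≤ D by omega) (by omega)

theorem wordEval_zigzagWord_of_forall_ne {i c : ℕ} {x : V}
    (hx : ∀ t, i ≤ t → t ≤ i + c → x ≠ p t) : wordEval (zigzagWord p i c) x = x := by
  induction c generalizing i with
  | zero => rfl
  | succ c ih =>
    rw [zigzagWord, wordEval_cons, wordEval_cons, arcMap_of_ne (hx (i + 1) (by omega) (by omega)),
      arcMap_of_ne (hx i le_rfl (by omega))]
    exact ih fun t h1 h2 => hx t (by omega) (by omega)

theorem wordEval_zigzagWord_apply_self (hinj : Set.InjOn p (Set.Iic D)) {i c : ℕ}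
    (hi : 1 ≤ i) (hic : i + c ≤ D) : wordEval (zigzagWord p i c) (p i) = p (i + c) := by
  induction c generalizing i with
  | zero => rfl
  | succ c ih =>
    rw [zigzagWord, wordEval_cons, wordEval_cons,
      arcMap_of_ne (hinj.ne (show i ≤ D by omega) (show i + 1 ≤ D by omega) (by omega)),
      arcMap_self_left, ih (by omega) (by omega), Nat.add_right_comm, Nat.add_assoc]

theorem wordEval_zigzagWord_apply_succ (hinj : Set.InjOn p (Set.Iic D)) {i c j : ℕ}
    (hi : 1 ≤ i) (hij : i ≤ j) (hjc : j < i + c) (hic : i + c ≤ D) :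
    wordEval (zigzagWord p i c) (p (j + 1)) = p (j - 1) := by
  induction c generalizing i with
  | zero => omega
  | succ c ih =>
    rw [zigzagWord, wordEval_cons, wordEval_cons]
    rcases Nat.eq_or_lt_of_le hij with rfl | hlt
    · rw [arcMap_self_left,
        arcMap_of_ne (hinj.ne (show i - 1 ≤ D by omega) (show i ≤ D by omega) (by omega))]
      exact wordEval_zigzagWord_of_forall_ne fun t h1 h2 =>
        hinj.ne (show i - 1 ≤ D by omega) (show t ≤ D by omega) (by omega)
    · rw [arcMap_of_ne
          (hinj.ne (show j + 1 ≤ D by omega) (show i + 1 ≤ D by omega) (by omega)),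
        arcMap_of_ne (hinj.ne (show j + 1 ≤ D by omega) (show i ≤ D by omega) (by omega))]
      exact ih (by omega) (by omega) (by omega) (by omega)

theorem wordEval_geodesicWord (hinj : Set.InjOn p (Set.Iic D)) (hD : 2 ≤ D) :
    wordEval (geodesicWord p D) = arcMap (p 0) (p D) := by
  have hne : ∀ i ≤ D, ∀ j ≤ D, i ≠ j → p i ≠ p j := fun i hi j hj => hinj.ne hi hj
  have hpair : wordEval (zigzagWord p 1 (D - 1)) (p 1) = p D := by
    rw [wordEval_zigzagWord_apply_self hinj le_rfl (by omega), Nat.add_sub_cancel' (by omega)]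
  have hend : wordEval (shiftWord p (D - 1)) (p D) = p D :=
    wordEval_shiftWord_of_forall_ne fun t ht => hne D le_rfl t (by omega) (by omega)
  funext x
  rw [geodesicWord, wordEval_cons, wordEval_append, wordEval_append]
  by_cases hx : ∃ t ≤ D, x = p t
  · obtain ⟨t, htD, rfl⟩ := hx
    by_cases hend' : t = 0 ∨ t = D
    · have h0 : arcMap (p D) (p 0) (p t) = p 0 := by
        rcases hend' with rfl | rfl
        · exact arcMap_of_ne (hne 0 (by omega) D le_rfl (by omega))
        · exact arcMap_self_left
      rw [h0, wordEval_shiftWord_apply hinj le_rfl (by omega), hpair, hend]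
      rcases hend' with rfl | rfl
      · exact arcMap_self_left.symm
      · exact (arcMap_of_ne (hne _ le_rfl 0 (by omega) (by omega))).symm
    · rw [arcMap_of_ne (hne t htD D le_rfl (by omega)), wordEval_shiftWord_apply hinj le_rfl
          (by omega), wordEval_zigzagWord_apply_succ hinj le_rfl (by omega) (by omega) (by omega),
        wordEval_shiftWord_apply hinj (by omega) (by omega), Nat.sub_add_cancel (by omega),
        arcMap_of_ne (hne t htD 0 (by omega) (by omega))]
  · simp only [not_exists, not_and] at hx
    rw [arcMap_of_ne (hx D le_rfl), wordEval_shiftWord_of_forall_ne fun t ht => hx t (by omega),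
      wordEval_zigzagWord_of_forall_ne fun t _ ht => hx t (by omega),
      wordEval_shiftWord_of_forall_ne fun t ht => hx t (by omega), arcMap_of_ne (hx 0 (by omega))]

theorem exists_word_length_eq_four_mul_ddist_sub_two (hT : IsTournament T) {u v : V}
    (huv : u ≠ v) (hnedge : ¬ T u v)
    (hreach : Relation.ReflTransGen T u v) : ∃ w : List (V × V),
      w.length = 4 * ddist T u v - 2 ∧ (∀ e ∈ w, T e.1 e.2) ∧ wordEval w = arcMap u v := by
  obtain ⟨p, hp0, hpd, hp⟩ := exists_walk_length_ddist hreach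
  set d := ddist T u v
  have hmin : d ≤ ddist T (p 0) (p d) := by rw [hp0, hpd]
  have hd : 2 ≤ d := by
    by_contra! hd
    obtain hd | hd : d = 0 ∨ d = 1 := by omega
    · exact huv (by rw [← hp0, ← hpd, hd])
    · have h01 := hp 0 (by omega)
      rw [hp0, zero_add, ← hd, hpd] at h01
      exact hnedge h01
  refine ⟨geodesicWord p d, length_geodesicWord p hd, rel_of_mem_geodesicWord hp
    (fun t h1 h2 => hT.rel_succ_pred_of_le_ddist hp hmin h1 h2) ?_, ?_⟩
  · rw [hp0, hpd]
    exact (hT.2 u v huv).1.resolve_left hnedge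
  · rw [wordEval_geodesicWord (injOn_of_le_ddist hp hmin) hd, hp0, hpd]

end Construction

theorem stmt18_general (n : ℕ) (T : Fin n → Fin n → Prop)
    (hT : IsTournament T) (hstrong : IsStrongDigraph T)
    (u v : Fin n) (huv : u ≠ v) (hnedge : ¬ T u v) :
    arcLen T (arcMap u v) = 4 * ddist T u v - 2 := by
  obtain ⟨w, hlen, hw, heval⟩ :=
    exists_word_length_eq_four_mul_ddist_sub_two hT huv hnedge (hstrong u v)
  refine le_antisymm (Nat.sInf_le ⟨w, hlen, hw, heval⟩) ?_
  obtain ⟨w', hlen', hw', heval'⟩ := Nat.sInf_mem (s := {k | ∃ w : List (Fin n × Fin n),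
      w.length = k ∧ (∀ e ∈ w, T e.1 e.2) ∧ wordEval w = arcMap u v})
    ⟨_, w, hlen, hw, heval⟩
  exact (four_mul_ddist_sub_two_le_length hT huv hnedge hw' heval').trans_eq hlen'

/-- for `n ≥ 3`, a strong tournament `T` on `{1,…,n}` and distinct vertices
`u, v` with `(u,v)` not an edge of `T`, `ℓ(T, (u→v)) = 4·d_T(u,v) − 2`. -/
theorem stmt18 (n : ℕ) (hn : 3 ≤ n) (T : Fin n → Fin n → Prop)
    (hT : IsTournament T) (hstrong : IsStrongDigraph T)
    (u v : Fin n) (huv : u ≠ v) (hnedge : ¬ T u v) :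
    arcLen T (arcMap u v) = 4 * ddist T u v - 2 :=
  stmt18_general n T hT hstrong u v huv hnedge
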